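/- Assume γ(n) ≠ 0 and α_{d2}(n) ≠ 0 for all n ∈ ℤ. Let φ̄_n : ℂ → ℂ (n ∈ ℤ) be differentiable functions satisfying, for all n ∈ ℤ and all x ∈ ℂ: x·φ̄_n(x) = Σ_{l=−1}^{d2} α_l(n+l)·φ̄_{n+l}(x) and φ̄_n′(x) = Σ_{j=−1}^{d1} β_j(n)·φ̄_{n−j}(x). Then for every N ∈ ℤ the dual window row vector Φ̄^{N−1}(x) := (φ̄_{N−1}(x), …, φ̄_{N+d2−1}(x)) satisfies the closed first-order linear differential system (Φ̄^{N−1})′(x) = Φ̄^{N−1}(x)·D̲1_N(x) for all x ∈ ℂ. -/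

import Mathlib

open Matrix BigOperators

noncomputable def abarMat (d2 : ℕ) (α : ℤ → ℤ → ℂ) (γ : ℤ → ℂ) (N : ℤ) (x : ℂ) :
    Matrix (Fin (d2 + 1)) (Fin (d2 + 1)) ℂ :=
  Matrix.of fun i b =>
    if (b : ℕ) = 0 then
      (if (i : ℕ) = 0 then (x - α 0 N) / γ (N - 1)
       else -α ((i : ℕ) : ℤ) (N + ((i : ℕ) : ℤ)) / γ (N - 1))
    else if (b : ℕ) = (i : ℕ) + 1 then 1 else 0

noncomputable def abarProd (d2 : ℕ) (α : ℤ → ℤ → ℂ) (γ : ℤ → ℂ) (N : ℤ) (x : ℂ) :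
    ℕ → Matrix (Fin (d2 + 1)) (Fin (d2 + 1)) ℂ
  | 0 => 1
  | j + 1 => abarProd d2 α γ N x j * abarMat d2 α γ (N - 1 - (j : ℤ)) x

noncomputable def D1barMat (d1 d2 : ℕ) (α β : ℤ → ℤ → ℂ) (γ : ℤ → ℂ) (N : ℤ) (x : ℂ) :
    Matrix (Fin (d2 + 1)) (Fin (d2 + 1)) ℂ :=
  (abarMat d2 α γ N x)⁻¹ * Matrix.diagonal (fun i : Fin _ => γ (N - 1 + ((i : ℕ) : ℤ)))
    + Matrix.diagonal (fun i : Fin _ => β 0 (N - 1 + ((i : ℕ) : ℤ)))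
    + ∑ j ∈ Finset.Icc 1 d1,
        abarProd d2 α γ N x j * Matrix.diagonal (fun i : Fin _ => β (j : ℤ) (N - 1 + ((i : ℕ) : ℤ)))

/-! ### Auxiliary material -/

namespace WindowAux

lemma vecMul_finsum {n : ℕ} {ι : Type*} (v : Fin n → ℂ)
    (s : Finset ι) (M : ι → Matrix (Fin n) (Fin n) ℂ) :
    Matrix.vecMul v (∑ j ∈ s, M j) = ∑ j ∈ s, Matrix.vecMul v (M j) := by
  induction s using Finset.cons_induction with
  | empty => simp
  | cons a s ha ih => simp [Finset.sum_cons, Matrix.vecMul_add, ih]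

lemma sum_Icc_int (a m : ℕ) (f : ℤ → ℂ) :
    ∑ l ∈ Finset.Icc (a : ℤ) (m : ℤ), f l = ∑ j ∈ Finset.Icc a m, f (j : ℤ) := by
  refine Finset.sum_nbij' (fun l => l.toNat) (fun n => (n : ℤ)) ?_ ?_ ?_ ?_ ?_ <;>
      intro y hy <;> simp only [Finset.mem_Icc] at *
  · omega
  · omega
  · omega
  · omega
  · congr 1; omega

lemma sum_Icc_zero_fin (m : ℕ) (f : ℤ → ℂ) :
    ∑ l ∈ Finset.Icc (0 : ℤ) (m : ℤ), f l = ∑ i : Fin (m + 1), f ((i : ℕ) : ℤ) := by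
  have h := sum_Icc_int 0 m f
  rw [Nat.cast_zero] at h
  rw [h, Fin.sum_univ_eq_sum_range (fun k : ℕ => f (k : ℤ))]
  refine Finset.sum_congr ?_ (fun _ _ => rfl)
  ext k; simp [Nat.lt_succ_iff]

section Shift

variable (d2 : ℕ) (α : ℤ → ℤ → ℂ) (γ : ℤ → ℂ)

/-- Window shift: `Φ^M ⋅ ā^M = Φ^{M-1}`. -/
lemma window_shift (hγ : ∀ n, γ n ≠ 0) (hαγ : ∀ n : ℤ, α (-1) n = γ n)
    (φb : ℤ → ℂ → ℂ)
    (hrec : ∀ (n : ℤ) (x : ℂ),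
      x * φb n x = ∑ l ∈ Finset.Icc (-1 : ℤ) (d2 : ℤ), α l (n + l) * φb (n + l) x)
    (M : ℤ) (x : ℂ) :
    Matrix.vecMul (fun i : Fin (d2 + 1) => φb (M + ((i : ℕ) : ℤ)) x) (abarMat d2 α γ M x)
      = fun i : Fin (d2 + 1) => φb (M - 1 + ((i : ℕ) : ℤ)) x := by
  funext b
  simp only [Matrix.vecMul, dotProduct]
  by_cases hb : (b : ℕ) = 0
  · -- first column
    have hA : ∀ i : Fin (d2 + 1), abarMat d2 α γ M x i b =
        ((if (i : ℕ) = 0 then x else 0) - α ((i : ℕ) : ℤ) (M + ((i : ℕ) : ℤ))) / γ (M - 1) := by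
      intro i
      simp only [abarMat, Matrix.of_apply, hb, if_true]
      split_ifs with h
      · simp [h]
      · rw [zero_sub, neg_div]
    simp_rw [hA]
    -- rewrite the recursion
    have hrecM := hrec M x
    have hins : Finset.Icc (-1 : ℤ) (d2 : ℤ) = insert (-1 : ℤ) (Finset.Icc 0 (d2 : ℤ)) := by
      ext l; simp only [Finset.mem_Icc, Finset.mem_insert]; omega
    rw [hins, Finset.sum_insert (by simp), sum_Icc_zero_fin d2
      (fun l => α l (M + l) * φb (M + l) x)] at hrecM
    rw [show M + (-1) = M - 1 by ring, hαγ] at hrecM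
    have hbz : φb (M - 1 + ((b : ℕ) : ℤ)) x = φb (M - 1) x := by
      rw [hb]; norm_num
    rw [hbz]
    have hg := hγ (M - 1)
    have hsplit : ∀ i : Fin (d2 + 1),
        φb (M + ((i : ℕ) : ℤ)) x *
          (((if (i : ℕ) = 0 then x else 0) - α ((i : ℕ) : ℤ) (M + ((i : ℕ) : ℤ))) / γ (M - 1)) =
        ((if i = (0 : Fin (d2 + 1)) then φb (M + ((i : ℕ) : ℤ)) x * x else 0)
          - α ((i : ℕ) : ℤ) (M + ((i : ℕ) : ℤ)) * φb (M + ((i : ℕ) : ℤ)) x) / γ (M - 1) := by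
      intro i
      rcases eq_or_ne i 0 with h | h
      · subst h
        simp only [Fin.val_zero, if_true]
        rw [← mul_div_assoc]
        congr 1
        ring
      · have hv : ¬ (i : ℕ) = 0 := fun hv => h (Fin.ext hv)
        rw [if_neg hv, if_neg h, ← mul_div_assoc]
        congr 1
        ring
    rw [Finset.sum_congr rfl (fun i _ => hsplit i), ← Finset.sum_div, Finset.sum_sub_distrib,
      Finset.sum_ite_eq' Finset.univ (0 : Fin (d2 + 1))]
    simp only [Finset.mem_univ, if_true, Fin.val_zero, Nat.cast_zero, add_zero]
    rw [div_eq_iff hg]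
    linear_combination hrecM
  · -- other columns: single 1 in the column
    have hA : ∀ i : Fin (d2 + 1), abarMat d2 α γ M x i b =
        if i = (⟨(b : ℕ) - 1, by omega⟩ : Fin (d2 + 1)) then 1 else 0 := by
      intro i
      simp only [abarMat, Matrix.of_apply, hb, if_false]
      congr 1
      simp only [eq_iff_iff, Fin.ext_iff]
      omega
    simp_rw [hA, mul_ite, mul_one, mul_zero, Finset.sum_ite_eq' Finset.univ _
      (fun i : Fin (d2 + 1) => φb (M + ((i : ℕ) : ℤ)) x), Finset.mem_univ, if_true]
    have harg : M + ((((b : ℕ) - 1 : ℕ)) : ℤ) = M - 1 + ((b : ℕ) : ℤ) := by omega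
    rw [harg]

/-- Column-0 entries of `abarMat`. -/
noncomputable def gcol (N : ℤ) (x : ℂ) (m : ℕ) : ℂ :=
  if m = 0 then (x - α 0 N) / γ (N - 1) else -α (m : ℤ) (N + (m : ℤ)) / γ (N - 1)

lemma abarMat_apply (N : ℤ) (x : ℂ) (i b : Fin (d2 + 1)) :
    abarMat d2 α γ N x i b =
      if (b : ℕ) = 0 then gcol α γ N x (i : ℕ)
      else if (b : ℕ) = (i : ℕ) + 1 then 1 else 0 := rfl

/-- Explicit right inverse of `abarMat`. -/
noncomputable def abarInv (N : ℤ) (x : ℂ) :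
    Matrix (Fin (d2 + 1)) (Fin (d2 + 1)) ℂ :=
  Matrix.of fun i b =>
    if (b : ℕ) = d2 then
      (if (i : ℕ) = 0 then 1 else -(gcol α γ N x ((i : ℕ) - 1))) * (gcol α γ N x d2)⁻¹
    else if (i : ℕ) = (b : ℕ) + 1 then 1 else 0

lemma abar_mul_inv (hd2 : 1 ≤ d2) (N : ℤ) (x : ℂ)
    (hγ : γ (N - 1) ≠ 0) (hα : α (d2 : ℤ) (N + (d2 : ℤ)) ≠ 0) :
    abarMat d2 α γ N x * abarInv d2 α γ N x = 1 := by
  have hgd2 : gcol α γ N x d2 ≠ 0 := by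
    rw [gcol, if_neg (by omega)]
    exact div_ne_zero (neg_ne_zero.mpr hα) hγ
  ext i k
  have hAi0 : abarMat d2 α γ N x i 0 = gcol α γ N x (i : ℕ) := by
    rw [abarMat_apply]
    simp
  have hAisucc : ∀ j : Fin d2,
      abarMat d2 α γ N x i j.succ = if (j : ℕ) = (i : ℕ) then 1 else 0 := by
    intro j
    rw [abarMat_apply, if_neg (by simp [Fin.val_succ])]
    congr 1
    simp only [Fin.val_succ, eq_iff_iff]
    omega
  have hB0k : abarInv d2 α γ N x 0 k =
      if (k : ℕ) = d2 then (gcol α γ N x d2)⁻¹ else 0 := by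
    by_cases h : (k : ℕ) = d2 <;>
      simp [abarInv, h]
  have hBsk : ∀ j : Fin d2, abarInv d2 α γ N x j.succ k =
      if (k : ℕ) = d2 then -(gcol α γ N x (j : ℕ)) * (gcol α γ N x d2)⁻¹
      else if (j : ℕ) + 1 = (k : ℕ) + 1 then 1 else 0 := by
    intro j
    simp only [abarInv, Matrix.of_apply, Fin.val_succ]
    by_cases h : (k : ℕ) = d2
    · rw [if_pos h, if_pos h, if_neg (by omega), Nat.add_sub_cancel]
    · rw [if_neg h, if_neg h]
  rw [Matrix.mul_apply, Fin.sum_univ_succ, hAi0, hB0k,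
    Finset.sum_congr rfl (fun j _ => by rw [hAisucc j, hBsk j])]
  rcases lt_or_eq_of_le (Nat.lt_succ_iff.mp i.isLt) with hi | hi
  · -- (i : ℕ) < d2
    have hsum : (∑ j : Fin d2, (if (j : ℕ) = (i : ℕ) then 1 else 0) *
        (if (k : ℕ) = d2 then -(gcol α γ N x (j : ℕ)) * (gcol α γ N x d2)⁻¹
         else if (j : ℕ) + 1 = (k : ℕ) + 1 then 1 else 0)) =
        (if (k : ℕ) = d2 then -(gcol α γ N x (i : ℕ)) * (gcol α γ N x d2)⁻¹
         else if (i : ℕ) + 1 = (k : ℕ) + 1 then 1 else 0) := by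
      have hcond : ∀ j : Fin d2, ((j : ℕ) = (i : ℕ)) = (j = ⟨(i : ℕ), hi⟩) := by
        intro j; simp only [eq_iff_iff, Fin.ext_iff]
      simp_rw [hcond, ite_mul, one_mul, zero_mul]
      rw [Finset.sum_ite_eq' Finset.univ (⟨(i : ℕ), hi⟩ : Fin d2), if_pos (Finset.mem_univ _)]
    rw [hsum]
    by_cases hk : (k : ℕ) = d2
    · rw [if_pos hk, if_pos hk, Matrix.one_apply_ne (by rw [ne_eq, Fin.ext_iff]; omega)]
      ring
    · rw [if_neg hk, if_neg hk, mul_zero, zero_add, Matrix.one_apply]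
      congr 1
      simp only [eq_iff_iff, Fin.ext_iff]
      omega
  · -- (i : ℕ) = d2
    have hsum : (∑ j : Fin d2, (if (j : ℕ) = (i : ℕ) then 1 else 0) *
        (if (k : ℕ) = d2 then -(gcol α γ N x (j : ℕ)) * (gcol α γ N x d2)⁻¹
         else if (j : ℕ) + 1 = (k : ℕ) + 1 then 1 else 0)) = 0 := by
      refine Finset.sum_eq_zero fun j _ => ?_
      rw [if_neg (by omega), zero_mul]
    rw [hsum, add_zero]
    by_cases hk : (k : ℕ) = d2
    · have hik : i = k := by rw [Fin.ext_iff]; omega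
      rw [if_pos hk, hi, mul_inv_cancel₀ hgd2, hik, Matrix.one_apply_eq]
    · rw [if_neg hk, mul_zero, Matrix.one_apply_ne (by rw [ne_eq, Fin.ext_iff]; omega)]

lemma window_vecMul_inv (hd2 : 1 ≤ d2) (hγ : ∀ n, γ n ≠ 0) (hαγ : ∀ n : ℤ, α (-1) n = γ n)
    (hαd2 : ∀ n : ℤ, α (d2 : ℤ) n ≠ 0)
    (φb : ℤ → ℂ → ℂ)
    (hrec : ∀ (n : ℤ) (x : ℂ),
      x * φb n x = ∑ l ∈ Finset.Icc (-1 : ℤ) (d2 : ℤ), α l (n + l) * φb (n + l) x)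
    (N : ℤ) (x : ℂ) :
    Matrix.vecMul (fun i : Fin (d2 + 1) => φb (N - 1 + ((i : ℕ) : ℤ)) x) (abarMat d2 α γ N x)⁻¹
      = fun i : Fin (d2 + 1) => φb (N + ((i : ℕ) : ℤ)) x := by
  have hAB := abar_mul_inv d2 α γ hd2 N x (hγ (N - 1)) (hαd2 (N + (d2 : ℤ)))
  rw [Matrix.inv_eq_right_inv hAB, ← window_shift d2 α γ hγ hαγ φb hrec N x,
    Matrix.vecMul_vecMul, hAB, Matrix.vecMul_one]

lemma window_prod (hγ : ∀ n, γ n ≠ 0) (hαγ : ∀ n : ℤ, α (-1) n = γ n)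
    (φb : ℤ → ℂ → ℂ)
    (hrec : ∀ (n : ℤ) (x : ℂ),
      x * φb n x = ∑ l ∈ Finset.Icc (-1 : ℤ) (d2 : ℤ), α l (n + l) * φb (n + l) x)
    (N : ℤ) (x : ℂ) (j : ℕ) :
    Matrix.vecMul (fun i : Fin (d2 + 1) => φb (N - 1 + ((i : ℕ) : ℤ)) x) (abarProd d2 α γ N x j)
      = fun i : Fin (d2 + 1) => φb (N - 1 - (j : ℤ) + ((i : ℕ) : ℤ)) x := by
  induction j with
  | zero => simp [abarProd, Matrix.vecMul_one]
  | succ j ih =>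
      rw [show abarProd d2 α γ N x (j + 1) =
        abarProd d2 α γ N x j * abarMat d2 α γ (N - 1 - (j : ℤ)) x from rfl,
        ← Matrix.vecMul_vecMul, ih,
        window_shift d2 α γ hγ hαγ φb hrec (N - 1 - (j : ℤ)) x]
      funext i
      have harg : N - 1 - (j : ℤ) - 1 + ((i : ℕ) : ℤ)
          = N - 1 - (((j + 1 : ℕ)) : ℤ) + ((i : ℕ) : ℤ) := by
        push_cast; ring
      rw [harg]

end Shift

end WindowAux

/-- The dual window `Φ̄^{N-1} = (φ̄_{N-1}, …, φ̄_{N+d2-1})` satisfies the closed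
differential system `(Φ̄^{N-1})' = Φ̄^{N-1} · D̲1_N`. -/
theorem window_diff_system_Phibar (d1 d2 : ℕ) (hd1 : 1 ≤ d1) (hd2 : 1 ≤ d2)
    (α β : ℤ → ℤ → ℂ) (γ : ℤ → ℂ)
    (hαsupp : ∀ j n : ℤ, (j < -1 ∨ (d2 : ℤ) < j) → α j n = 0)
    (hβsupp : ∀ j n : ℤ, (j < -1 ∨ (d1 : ℤ) < j) → β j n = 0)
    (hαγ : ∀ n : ℤ, α (-1) n = γ n)
    (hβγ : ∀ n : ℤ, β (-1) n = γ n)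
    (hγ : ∀ n : ℤ, γ n ≠ 0) (hαd2 : ∀ n : ℤ, α (d2 : ℤ) n ≠ 0)
    (φb : ℤ → ℂ → ℂ)
    (hφbdiff : ∀ n : ℤ, Differentiable ℂ (φb n))
    (hrec : ∀ (n : ℤ) (x : ℂ),
      x * φb n x = ∑ l ∈ Finset.Icc (-1 : ℤ) (d2 : ℤ), α l (n + l) * φb (n + l) x)
    (hder : ∀ (n : ℤ) (x : ℂ),
      deriv (φb n) x = ∑ j ∈ Finset.Icc (-1 : ℤ) (d1 : ℤ), β j n * φb (n - j) x)
    (N : ℤ) (x : ℂ) :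
    (fun i : Fin (d2 + 1) => deriv (φb (N - 1 + ((i : ℕ) : ℤ))) x) =
      Matrix.vecMul (fun i : Fin (d2 + 1) => φb (N - 1 + ((i : ℕ) : ℤ)) x)
        (D1barMat d1 d2 α β γ N x) := by
  rw [D1barMat, Matrix.vecMul_add, Matrix.vecMul_add, WindowAux.vecMul_finsum,
    ← Matrix.vecMul_vecMul,
    WindowAux.window_vecMul_inv d2 α γ hd2 hγ hαγ hαd2 φb hrec N x]
  have hterm3 : ∀ j ∈ Finset.Icc 1 d1,
      Matrix.vecMul (fun i : Fin (d2 + 1) => φb (N - 1 + ((i : ℕ) : ℤ)) x)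
        (abarProd d2 α γ N x j *
          Matrix.diagonal (fun i : Fin (d2 + 1) => β (j : ℤ) (N - 1 + ((i : ℕ) : ℤ))))
      = fun i : Fin (d2 + 1) =>
          φb (N - 1 - (j : ℤ) + ((i : ℕ) : ℤ)) x * β (j : ℤ) (N - 1 + ((i : ℕ) : ℤ)) := by
    intro j _
    rw [← Matrix.vecMul_vecMul, WindowAux.window_prod d2 α γ hγ hαγ φb hrec N x j]
    funext i
    rw [Matrix.vecMul_diagonal]
  rw [Finset.sum_congr rfl hterm3]
  funext i
  simp only [Pi.add_apply, Finset.sum_apply, Matrix.vecMul_diagonal]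
  rw [hder]
  have hins : Finset.Icc (-1 : ℤ) (d1 : ℤ)
      = insert (-1 : ℤ) (insert (0 : ℤ) (Finset.Icc 1 (d1 : ℤ))) := by
    ext l; simp only [Finset.mem_Icc, Finset.mem_insert]; omega
  rw [hins, Finset.sum_insert (by simp only [Finset.mem_insert, Finset.mem_Icc]; omega),
    Finset.sum_insert (by simp only [Finset.mem_Icc]; omega), hβγ]
  have hIcc := WindowAux.sum_Icc_int 1 d1
    (fun l => β l (N - 1 + ((i : ℕ) : ℤ)) * φb (N - 1 + ((i : ℕ) : ℤ) - l) x)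
  rw [Nat.cast_one] at hIcc
  rw [hIcc,
    show N - 1 + ((i : ℕ) : ℤ) - (-1) = N + ((i : ℕ) : ℤ) by ring,
    show N - 1 + ((i : ℕ) : ℤ) - 0 = N - 1 + ((i : ℕ) : ℤ) by ring]
  have hsummand : ∀ j ∈ Finset.Icc 1 d1,
      β ((j : ℕ) : ℤ) (N - 1 + ((i : ℕ) : ℤ)) * φb (N - 1 + ((i : ℕ) : ℤ) - (j : ℤ)) x
      = φb (N - 1 - (j : ℤ) + ((i : ℕ) : ℤ)) x * β (j : ℤ) (N - 1 + ((i : ℕ) : ℤ)) := by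
    intro j _
    rw [show N - 1 + ((i : ℕ) : ℤ) - (j : ℤ) = N - 1 - (j : ℤ) + ((i : ℕ) : ℤ) by ring]
    ring
  rw [Finset.sum_congr rfl hsummand]
  ring
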